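/- arXiv:1506.06223 — 3 statements merged into one kernel-verified Lean document; each statement's English description precedes it below -/
import Mathlib

section
/- Let T be a 2×2 complex Hermitian matrix such that Tr((log(ABA)) T) = 2 Tr((log A) T) + Tr((log B) T) holds for all A, B ∈ ℙ_2, where log denotes the matrix logarithm of a positive definite matrix. Then T is a real scalar multiple of the identity matrix. -/
open Matrix ComplexOrder
open scoped Matrix.Norms.L2Operator

namespace HermTraceAux

/-- Uniqueness of the Hermitian logarithm. -/
lemma herm_exp_unique {X Y : Matrix (Fin 2) (Fin 2) ℂ} (hX : X.IsHermitian) (hY : Y.IsHermitian)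
    (h : NormedSpace.exp X = NormedSpace.exp Y) : X = Y := by
  have hX' : IsSelfAdjoint X := hX
  have hY' : IsSelfAdjoint Y := hY
  have h2 : NormedSpace.exp X = NormedSpace.exp Y := by
    exact h
  calc X = CFC.log (NormedSpace.exp X) := (CFC.log_exp X hX').symm
  _ = CFC.log (NormedSpace.exp Y) := by rw [h2]
  _ = Y := CFC.log_exp Y hY'

lemma diag2 (x y : ℂ) : Matrix.diagonal ![x, y] = !![x, 0; 0, y] := by
  ext i j
  fin_cases i <;> fin_cases j <;> simp [Matrix.diagonal]

lemma exp_diag2 (x y : ℂ) :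
    NormedSpace.exp !![x, 0; 0, y] = !![Complex.exp x, 0; 0, Complex.exp y] := by
  have hv : NormedSpace.exp ![x, y] = ![Complex.exp x, Complex.exp y] := by
    funext i
    rw [Pi.coe_exp]
    fin_cases i <;> simp [← Complex.exp_eq_exp_ℂ]
  rw [← diag2, Matrix.exp_diagonal, hv, diag2]

lemma exp_SDS (S S' : Matrix (Fin 2) (Fin 2) ℂ) (h : S * S' = 1) (x y : ℂ) :
    NormedSpace.exp (S * !![x, 0; 0, y] * S') =
      S * !![Complex.exp x, 0; 0, Complex.exp y] * S' := by
  have hu : IsUnit S := ⟨⟨S, S', h, mul_eq_one_comm.mp h⟩, rfl⟩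
  have hinv : S⁻¹ = S' := Matrix.inv_eq_right_inv h
  rw [← hinv, Matrix.exp_conj S _ hu, exp_diag2]

lemma posdef2 (a d : ℝ) (b : ℂ) (ha : 0 < a) (hdet : Complex.normSq b < a * d) :
    Matrix.PosDef !![(a:ℂ), b; (starRingEnd ℂ) b, (d:ℂ)] := by
  refine Matrix.posDef_iff_dotProduct_mulVec.mpr ⟨?_, ?_⟩
  · ext i j
    fin_cases i <;> fin_cases j <;>
      simp [Matrix.conjTranspose_apply, Complex.conj_ofReal]
  · intro x hx
    have hx2 : x 0 ≠ 0 ∨ x 1 ≠ 0 := by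
      by_contra h
      push_neg at h
      exact hx (funext fun i => by fin_cases i <;> simp [h.1, h.2])
    rcases h0 : x 0 with ⟨r0, i0⟩
    rcases h1 : x 1 with ⟨r1, i1⟩
    have hx' : 0 < r0^2 + i0^2 + (r1^2 + i1^2) := by
      rcases hx2 with h | h
      · rw [h0] at h
        have h2 : r0 ≠ 0 ∨ i0 ≠ 0 := by
          by_contra hc; push_neg at hc; exact h (by simp [Complex.ext_iff, hc.1, hc.2])
        rcases h2 with h' | h' <;>
          nlinarith [sq_nonneg r0, sq_nonneg i0, sq_nonneg r1, sq_nonneg i1,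
            mul_self_pos.mpr h']
      · rw [h1] at h
        have h2 : r1 ≠ 0 ∨ i1 ≠ 0 := by
          by_contra hc; push_neg at hc; exact h (by simp [Complex.ext_iff, hc.1, hc.2])
        rcases h2 with h' | h' <;>
          nlinarith [sq_nonneg r0, sq_nonneg i0, sq_nonneg r1, sq_nonneg i1,
            mul_self_pos.mpr h']
    have hdet' : b.re^2 + b.im^2 < a * d := by
      have h : Complex.normSq b = b.re^2 + b.im^2 := by simp [Complex.normSq_apply, sq]
      linarith [h.symm.le, h.le]
    have key : (star x ⬝ᵥ !![(a:ℂ), b; (starRingEnd ℂ) b, (d:ℂ)] *ᵥ x) =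
        ((a*(r0^2+i0^2) + d*(r1^2+i1^2)
          + 2*(b.re*(r0*r1+i0*i1) + b.im*(i0*r1-r0*i1)) : ℝ) : ℂ) := by
      apply Complex.ext <;>
        simp [dotProduct, Matrix.mulVec, Fin.sum_univ_two, h0, h1,
          Complex.add_re, Complex.add_im, Complex.mul_re, Complex.mul_im,
          ← Complex.ofReal_pow] <;> ring
    rw [key, Complex.zero_lt_real]
    have iden : a * (a*(r0^2+i0^2) + d*(r1^2+i1^2)
          + 2*(b.re*(r0*r1+i0*i1) + b.im*(i0*r1-r0*i1)))
        = (a*r0 + b.re*r1 - b.im*i1)^2 + (a*i0 + b.re*i1 + b.im*r1)^2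
          + (a*d - (b.re^2+b.im^2))*(r1^2+i1^2) := by ring
    have hS1 := sq_nonneg (a*r0 + b.re*r1 - b.im*i1)
    have hS2 := sq_nonneg (a*i0 + b.re*i1 + b.im*r1)
    by_cases hq : r1^2+i1^2 = 0
    · have hr1 : r1 = 0 := by nlinarith [sq_nonneg r1, sq_nonneg i1]
      have hi1 : i1 = 0 := by nlinarith [sq_nonneg r1, sq_nonneg i1]
      rw [hr1, hi1] at hx' ⊢
      nlinarith [mul_pos ha hx']
    · have hq' : 0 < r1^2+i1^2 := lt_of_le_of_ne (by positivity) (Ne.symm hq)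
      nlinarith [iden, hS1, hS2, mul_pos (sub_pos.mpr hdet') hq', ha]

end HermTraceAux

open HermTraceAux

set_option maxHeartbeats 1600000 in
/-- If T is Hermitian and Tr((log ABA)T) = 2Tr((log A)T) + Tr((log B)T) for all
positive definite A, B, then T is a real scalar multiple of the identity. -/
theorem hermitian_trace_functional_scalar
    (T : Matrix (Fin 2) (Fin 2) ℂ) (hT : T.IsHermitian)
    (log : Matrix (Fin 2) (Fin 2) ℂ → Matrix (Fin 2) (Fin 2) ℂ)
    (hlog : ∀ A : Matrix (Fin 2) (Fin 2) ℂ, A.PosDef →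
      (log A).IsHermitian ∧ NormedSpace.exp (log A) = A)
    (htr : ∀ A B : Matrix (Fin 2) (Fin 2) ℂ, A.PosDef → B.PosDef →
      (log (A * B * A) * T).trace =
        2 * (log A * T).trace + (log B * T).trace) :
    ∃ r : ℝ, T = r • (1 : Matrix (Fin 2) (Fin 2) ℂ) := by
  have key : ∀ A X : Matrix (Fin 2) (Fin 2) ℂ, A.PosDef → X.IsHermitian →
      NormedSpace.exp X = A → log A = X := fun A X hA hX hexp =>
    herm_exp_unique (hlog A hA).1 hX (by rw [(hlog A hA).2, hexp])
  set c2 : ℂ := ((Real.log 2 : ℝ) : ℂ) with hc2def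
  set c3 : ℂ := ((Real.log 3 : ℝ) : ℂ) with hc3def
  have hconj2 : (starRingEnd ℂ) c2 = c2 := Complex.conj_ofReal _
  have hconj3 : (starRingEnd ℂ) c3 = c3 := Complex.conj_ofReal _
  have e2 : Complex.exp c2 = 2 := by
    rw [hc2def, ← Complex.ofReal_exp, Real.exp_log (by norm_num : (0:ℝ) < 2)]
    norm_num
  have e3 : Complex.exp c3 = 3 := by
    rw [hc3def, ← Complex.ofReal_exp, Real.exp_log (by norm_num : (0:ℝ) < 3)]
    norm_num
  have eB1 : Complex.exp (-(c2+c3)) = 1/6 := by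
    rw [Complex.exp_neg, Complex.exp_add, e2, e3]; norm_num
  have eM1 : Complex.exp (c2+c3) = 6 := by rw [Complex.exp_add, e2, e3]; norm_num
  have eB2 : Complex.exp (-c3) = 1/3 := by rw [Complex.exp_neg, e3]; norm_num
  have eM2 : Complex.exp (2*c2+c3) = 12 := by
    rw [two_mul, add_assoc, Complex.exp_add, Complex.exp_add, e2, e3]; norm_num
  -- the key transcendence fact
  have hclog : (9:ℝ) * Real.log 3 < 16 * Real.log 2 := by
    have h1 : Real.log ((3:ℝ)^(9:ℕ)) < Real.log ((2:ℝ)^(16:ℕ)) :=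
      Real.log_lt_log (by positivity) (by norm_num)
    rw [Real.log_pow, Real.log_pow] at h1
    push_cast at h1
    linarith
  have hcne : (16*c2 - 9*c3 : ℂ) ≠ 0 := by
    have : (16*c2 - 9*c3 : ℂ) = ((16*Real.log 2 - 9*Real.log 3 : ℝ) : ℂ) := by
      rw [hc2def, hc3def]; push_cast; ring
    rw [this]
    exact_mod_cast Complex.ofReal_ne_zero.mpr (by linarith)
  -- ### Instance 1 : A1 = diag(3,2), B1
  have pdA1 : Matrix.PosDef (!![3, 0; 0, 2] : Matrix (Fin 2) (Fin 2) ℂ) := by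
    have h := posdef2 3 2 0 (by norm_num) (by norm_num [Complex.normSq_apply])
    have he : (!![((3:ℝ):ℂ), 0; (starRingEnd ℂ) 0, ((2:ℝ):ℂ)] : Matrix (Fin 2) (Fin 2) ℂ)
        = !![3, 0; 0, 2] := by
      ext i j
      fin_cases i <;> fin_cases j <;>
        simp [Complex.ofReal_div, map_div₀, map_ofNat] <;> norm_num
    rwa [he] at h
  have pdB1 : Matrix.PosDef (!![7/15, 2/5; 2/5, 7/10] : Matrix (Fin 2) (Fin 2) ℂ) := by
    have h := posdef2 (7/15) (7/10) (2/5)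
      (by norm_num) (by norm_num [Complex.normSq_apply])
    have he : (!![((7/15 : ℝ):ℂ), (2/5 : ℂ); (starRingEnd ℂ) (2/5 : ℂ), ((7/10 : ℝ):ℂ)]
        : Matrix (Fin 2) (Fin 2) ℂ) = !![7/15, 2/5; 2/5, 7/10] := by
      ext i j
      fin_cases i <;> fin_cases j <;>
        simp [Complex.ofReal_div, map_div₀, map_ofNat] <;> norm_num
    rwa [he] at h
  have hlogA1 : log !![3, 0; 0, 2] = !![c3, 0; 0, c2] := by
    apply key _ _ pdA1
    · ext i j
      fin_cases i <;> fin_cases j <;>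
        simp [Matrix.conjTranspose_apply, map_div₀, map_ofNat, hconj2, hconj3, Complex.conj_I]
    · rw [exp_diag2, e2, e3]
  have hSB1 : (!![(3:ℂ), 4; 4, -3]) * !![3/25, 4/25; 4/25, -3/25] = 1 := by
    ext i j
    fin_cases i <;> fin_cases j <;>
      simp [Matrix.mul_apply, Fin.sum_univ_two, Matrix.one_apply] <;> norm_num
  have hXB1 : (!![(3:ℂ), 4; 4, -3]) * !![0, 0; 0, -(c2+c3)] * !![3/25, 4/25; 4/25, -3/25]
      = !![-(16/25)*(c2+c3), (12/25)*(c2+c3); (12/25)*(c2+c3), -(9/25)*(c2+c3)] := by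
    ext i j
    fin_cases i <;> fin_cases j <;>
      (simp [Matrix.mul_apply, Fin.sum_univ_two]
       try ring_nf
       try simp [Complex.I_sq]
       try ring_nf)
  have hlogB1 : log !![7/15, 2/5; 2/5, 7/10]
      = !![-(16/25)*(c2+c3), (12/25)*(c2+c3); (12/25)*(c2+c3), -(9/25)*(c2+c3)] := by
    apply key _ _ pdB1
    · ext i j
      fin_cases i <;> fin_cases j <;>
        simp [Matrix.conjTranspose_apply, map_div₀, map_ofNat, hconj2, hconj3, Complex.conj_I]
    · rw [← hXB1, exp_SDS _ _ hSB1, Complex.exp_zero, eB1]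
      ext i j
      fin_cases i <;> fin_cases j <;>
        (simp [Matrix.mul_apply, Fin.sum_univ_two]; norm_num)
  have hABA1 : (!![3, 0; 0, 2] : Matrix (Fin 2) (Fin 2) ℂ) * !![7/15, 2/5; 2/5, 7/10]
      * !![3, 0; 0, 2] = !![21/5, 12/5; 12/5, 14/5] := by
    ext i j
    fin_cases i <;> fin_cases j <;>
      (simp [Matrix.mul_apply, Fin.sum_univ_two]; norm_num)
  have pdM1 : Matrix.PosDef (!![21/5, 12/5; 12/5, 14/5] : Matrix (Fin 2) (Fin 2) ℂ) := by
    have h := posdef2 (21/5) (14/5) (12/5)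
      (by norm_num) (by norm_num [Complex.normSq_apply])
    have he : (!![((21/5 : ℝ):ℂ), (12/5 : ℂ); (starRingEnd ℂ) (12/5 : ℂ), ((14/5 : ℝ):ℂ)]
        : Matrix (Fin 2) (Fin 2) ℂ) = !![21/5, 12/5; 12/5, 14/5] := by
      ext i j
      fin_cases i <;> fin_cases j <;>
        simp [Complex.ofReal_div, map_div₀, map_ofNat] <;> norm_num
    rwa [he] at h
  have hSM1 : (!![(4:ℂ), 3; 3, -4]) * !![4/25, 3/25; 3/25, -4/25] = 1 := by
    ext i j
    fin_cases i <;> fin_cases j <;>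
      simp [Matrix.mul_apply, Fin.sum_univ_two, Matrix.one_apply] <;> norm_num
  have hXM1 : (!![(4:ℂ), 3; 3, -4]) * !![c2+c3, 0; 0, 0] * !![4/25, 3/25; 3/25, -4/25]
      = !![(16/25)*(c2+c3), (12/25)*(c2+c3); (12/25)*(c2+c3), (9/25)*(c2+c3)] := by
    ext i j
    fin_cases i <;> fin_cases j <;>
      (simp [Matrix.mul_apply, Fin.sum_univ_two]
       try ring_nf
       try simp [Complex.I_sq]
       try ring_nf)
  have hlogM1 : log !![21/5, 12/5; 12/5, 14/5]
      = !![(16/25)*(c2+c3), (12/25)*(c2+c3); (12/25)*(c2+c3), (9/25)*(c2+c3)] := by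
    apply key _ _ pdM1
    · ext i j
      fin_cases i <;> fin_cases j <;>
        simp [Matrix.conjTranspose_apply, map_div₀, map_ofNat, hconj2, hconj3, Complex.conj_I]
    · rw [← hXM1, exp_SDS _ _ hSM1, Complex.exp_zero, eM1]
      ext i j
      fin_cases i <;> fin_cases j <;>
        (simp [Matrix.mul_apply, Fin.sum_univ_two]; norm_num)
  have ht1 := htr _ _ pdA1 pdB1
  rw [hABA1, hlogM1, hlogA1, hlogB1] at ht1
  simp [Matrix.trace_fin_two, Matrix.mul_apply, Matrix.vecMul, dotProduct,
    Fin.sum_univ_two, Matrix.of_apply,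
    Matrix.cons_val', Matrix.cons_val_zero, Matrix.cons_val_one, Matrix.head_cons,
    Matrix.head_fin_const, Matrix.empty_val', Matrix.cons_val_fin_one] at ht1
  have h1 : T 0 0 = T 1 1 := by
    have hkey1 : (16*c2 - 9*c3) * (T 0 0 - T 1 1) = 0 := by
      linear_combination (25/2 : ℂ) * ht1
    rcases mul_eq_zero.mp hkey1 with h | h
    · exact absurd h hcne
    · exact sub_eq_zero.mp h
  -- ### Instance 2
  have pdA2 : Matrix.PosDef (!![66/25, 12/25; 12/25, 59/25] : Matrix (Fin 2) (Fin 2) ℂ) := by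
    have h := posdef2 (66/25) (59/25) (12/25)
      (by norm_num) (by norm_num [Complex.normSq_apply])
    have he : (!![((66/25 : ℝ):ℂ), (12/25 : ℂ); (starRingEnd ℂ) (12/25 : ℂ), ((59/25 : ℝ):ℂ)]
        : Matrix (Fin 2) (Fin 2) ℂ) = !![66/25, 12/25; 12/25, 59/25] := by
      ext i j
      fin_cases i <;> fin_cases j <;>
        simp [Complex.ofReal_div, map_div₀, map_ofNat] <;> norm_num
    rwa [he] at h
  have pdB2 : Matrix.PosDef (!![1/3, 0; 0, 2] : Matrix (Fin 2) (Fin 2) ℂ) := by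
    have h := posdef2 (1/3) 2 0 (by norm_num) (by norm_num [Complex.normSq_apply])
    have he : (!![((1/3 : ℝ):ℂ), (0 : ℂ); (starRingEnd ℂ) (0 : ℂ), ((2:ℝ):ℂ)]
        : Matrix (Fin 2) (Fin 2) ℂ) = !![1/3, 0; 0, 2] := by
      ext i j
      fin_cases i <;> fin_cases j <;>
        simp [Complex.ofReal_div, map_div₀, map_ofNat] <;> norm_num
    rwa [he] at h
  have hlogB2 : log !![1/3, 0; 0, 2] = !![-c3, 0; 0, c2] := by
    apply key _ _ pdB2
    · ext i j
      fin_cases i <;> fin_cases j <;>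
        simp [Matrix.conjTranspose_apply, map_div₀, map_ofNat, hconj2, hconj3, Complex.conj_I]
    · rw [exp_diag2, e2, eB2]
  have hXA2 : (!![(4:ℂ), 3; 3, -4]) * !![c3, 0; 0, c2] * !![4/25, 3/25; 3/25, -4/25]
      = !![(16*c3+9*c2)/25, (12*(c3-c2))/25; (12*(c3-c2))/25, (9*c3+16*c2)/25] := by
    ext i j
    fin_cases i <;> fin_cases j <;>
      (simp [Matrix.mul_apply, Fin.sum_univ_two]
       try ring_nf
       try simp [Complex.I_sq]
       try ring_nf)
  have hlogA2 : log !![66/25, 12/25; 12/25, 59/25]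
      = !![(16*c3+9*c2)/25, (12*(c3-c2))/25; (12*(c3-c2))/25, (9*c3+16*c2)/25] := by
    apply key _ _ pdA2
    · ext i j
      fin_cases i <;> fin_cases j <;>
        simp [Matrix.conjTranspose_apply, map_div₀, map_ofNat, hconj2, hconj3, Complex.conj_I]
    · rw [← hXA2, exp_SDS _ _ hSM1, e2, e3]
      ext i j
      fin_cases i <;> fin_cases j <;>
        (simp [Matrix.mul_apply, Fin.sum_univ_two]; norm_num)
  have hABA2 : (!![66/25, 12/25; 12/25, 59/25] : Matrix (Fin 2) (Fin 2) ℂ) * !![1/3, 0; 0, 2]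
      * !![66/25, 12/25; 12/25, 59/25] = !![348/125, 336/125; 336/125, 1402/125] := by
    ext i j
    fin_cases i <;> fin_cases j <;>
      (simp [Matrix.mul_apply, Fin.sum_univ_two]; norm_num)
  have pdM2 : Matrix.PosDef (!![348/125, 336/125; 336/125, 1402/125]
      : Matrix (Fin 2) (Fin 2) ℂ) := by
    have h := posdef2 (348/125) (1402/125) (336/125)
      (by norm_num) (by norm_num [Complex.normSq_apply])
    have he : (!![((348/125 : ℝ):ℂ), (336/125 : ℂ); (starRingEnd ℂ) (336/125 : ℂ),
        ((1402/125 : ℝ):ℂ)] : Matrix (Fin 2) (Fin 2) ℂ)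
        = !![348/125, 336/125; 336/125, 1402/125] := by
      ext i j
      fin_cases i <;> fin_cases j <;>
        simp [Complex.ofReal_div, map_div₀, map_ofNat] <;> norm_num
    rwa [he] at h
  have hSM2 : (!![(7:ℂ), 24; 24, -7]) * !![7/625, 24/625; 24/625, -7/625] = 1 := by
    ext i j
    fin_cases i <;> fin_cases j <;>
      simp [Matrix.mul_apply, Fin.sum_univ_two, Matrix.one_apply] <;> norm_num
  have hXM2 : (!![(7:ℂ), 24; 24, -7]) * !![2*c2+c3, 0; 0, c2] * !![7/625, 24/625; 24/625, -7/625]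
      = !![(49*(2*c2+c3)+576*c2)/625, (168*(c2+c3))/625;
           (168*(c2+c3))/625, (576*(2*c2+c3)+49*c2)/625] := by
    ext i j
    fin_cases i <;> fin_cases j <;>
      (simp [Matrix.mul_apply, Fin.sum_univ_two]
       try ring_nf
       try simp [Complex.I_sq]
       try ring_nf)
  have hlogM2 : log !![348/125, 336/125; 336/125, 1402/125]
      = !![(49*(2*c2+c3)+576*c2)/625, (168*(c2+c3))/625;
           (168*(c2+c3))/625, (576*(2*c2+c3)+49*c2)/625] := by
    apply key _ _ pdM2
    · ext i j
      fin_cases i <;> fin_cases j <;>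
        simp [Matrix.conjTranspose_apply, map_div₀, map_ofNat, hconj2, hconj3, Complex.conj_I]
    · rw [← hXM2, exp_SDS _ _ hSM2, e2, eM2]
      ext i j
      fin_cases i <;> fin_cases j <;>
        (simp [Matrix.mul_apply, Fin.sum_univ_two]; norm_num)
  have ht2 := htr _ _ pdA2 pdB2
  rw [hABA2, hlogM2, hlogA2, hlogB2] at ht2
  simp [Matrix.trace_fin_two, Matrix.mul_apply, Matrix.vecMul, dotProduct,
    Fin.sum_univ_two, Matrix.of_apply,
    Matrix.cons_val', Matrix.cons_val_zero, Matrix.cons_val_one, Matrix.head_cons,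
    Matrix.head_fin_const, Matrix.empty_val', Matrix.cons_val_fin_one] at ht2
  have h2 : T 0 1 + T 1 0 = 0 := by
    have hkey2 : (16*c2 - 9*c3) * (T 0 1 + T 1 0) = 0 := by
      linear_combination (625/48 : ℂ) * ht2 - (14/48 : ℂ)*(16*c2-9*c3) * h1
    rcases mul_eq_zero.mp hkey2 with h | h
    · exact absurd h hcne
    · exact h
  -- ### Instance 3 : conjugated by diag(1, i)
  have pdA3 : Matrix.PosDef (!![66/25, -(12/25)*Complex.I; (12/25)*Complex.I, 59/25]
      : Matrix (Fin 2) (Fin 2) ℂ) := by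
    have h := posdef2 (66/25) (59/25) (-(12/25)*Complex.I)
      (by norm_num)
      (by norm_num [Complex.normSq_apply, Complex.mul_re, Complex.mul_im])
    have he : (!![((66/25 : ℝ):ℂ), (-(12/25)*Complex.I : ℂ);
        (starRingEnd ℂ) (-(12/25)*Complex.I : ℂ), ((59/25 : ℝ):ℂ)]
        : Matrix (Fin 2) (Fin 2) ℂ)
        = !![66/25, -(12/25)*Complex.I; (12/25)*Complex.I, 59/25] := by
      ext i j
      fin_cases i <;> fin_cases j <;>
        simp [Complex.ofReal_div, map_div₀, map_ofNat, _root_.map_mul, map_neg, Complex.conj_I] <;>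
          norm_num
    rwa [he] at h
  have hSA3 : (!![(4:ℂ), 3; 3*Complex.I, -4*Complex.I])
      * !![4/25, -(3/25)*Complex.I; 3/25, (4/25)*Complex.I] = 1 := by
    ext i j
    fin_cases i <;> fin_cases j <;>
      simp [Matrix.mul_apply, Fin.sum_univ_two, Matrix.one_apply, Complex.ext_iff,
        Complex.mul_re, Complex.mul_im] <;> norm_num
  have hXA3 : (!![(4:ℂ), 3; 3*Complex.I, -4*Complex.I]) * !![c3, 0; 0, c2]
      * !![4/25, -(3/25)*Complex.I; 3/25, (4/25)*Complex.I]
      = !![(16*c3+9*c2)/25, -((12*(c3-c2))/25)*Complex.I;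
           ((12*(c3-c2))/25)*Complex.I, (9*c3+16*c2)/25] := by
    ext i j
    fin_cases i <;> fin_cases j <;>
      (simp [Matrix.mul_apply, Fin.sum_univ_two]
       try ring_nf
       try simp [Complex.I_sq]
       try ring_nf)
  have hlogA3 : log !![66/25, -(12/25)*Complex.I; (12/25)*Complex.I, 59/25]
      = !![(16*c3+9*c2)/25, -((12*(c3-c2))/25)*Complex.I;
           ((12*(c3-c2))/25)*Complex.I, (9*c3+16*c2)/25] := by
    apply key _ _ pdA3
    · ext i j
      fin_cases i <;> fin_cases j <;>
        simp [Matrix.conjTranspose_apply, map_div₀, map_ofNat, hconj2, hconj3, Complex.conj_I] <;> ring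
    · rw [← hXA3, exp_SDS _ _ hSA3, e2, e3]
      ext i j
      fin_cases i <;> fin_cases j <;>
        (simp [Matrix.mul_apply, Fin.sum_univ_two, Complex.ext_iff,
          Complex.mul_re, Complex.mul_im]; norm_num)
  have hABA3 : (!![66/25, -(12/25)*Complex.I; (12/25)*Complex.I, 59/25]
        : Matrix (Fin 2) (Fin 2) ℂ) * !![1/3, 0; 0, 2]
      * !![66/25, -(12/25)*Complex.I; (12/25)*Complex.I, 59/25]
      = !![348/125, -(336/125)*Complex.I; (336/125)*Complex.I, 1402/125] := by
    ext i j
    fin_cases i <;> fin_cases j <;>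
      (simp [Matrix.mul_apply, Fin.sum_univ_two, Complex.ext_iff,
        Complex.mul_re, Complex.mul_im]; norm_num)
  have pdM3 : Matrix.PosDef (!![348/125, -(336/125)*Complex.I; (336/125)*Complex.I, 1402/125]
      : Matrix (Fin 2) (Fin 2) ℂ) := by
    have h := posdef2 (348/125) (1402/125) (-(336/125)*Complex.I)
      (by norm_num)
      (by norm_num [Complex.normSq_apply, Complex.mul_re, Complex.mul_im])
    have he : (!![((348/125 : ℝ):ℂ), (-(336/125)*Complex.I : ℂ);
        (starRingEnd ℂ) (-(336/125)*Complex.I : ℂ), ((1402/125 : ℝ):ℂ)]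
        : Matrix (Fin 2) (Fin 2) ℂ)
        = !![348/125, -(336/125)*Complex.I; (336/125)*Complex.I, 1402/125] := by
      ext i j
      fin_cases i <;> fin_cases j <;>
        simp [Complex.ofReal_div, map_div₀, map_ofNat, _root_.map_mul, map_neg, Complex.conj_I] <;>
          norm_num
    rwa [he] at h
  have hSM3 : (!![(7:ℂ), 24; 24*Complex.I, -7*Complex.I])
      * !![7/625, -(24/625)*Complex.I; 24/625, (7/625)*Complex.I] = 1 := by
    ext i j
    fin_cases i <;> fin_cases j <;>
      simp [Matrix.mul_apply, Fin.sum_univ_two, Matrix.one_apply, Complex.ext_iff,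
        Complex.mul_re, Complex.mul_im] <;> norm_num
  have hXM3 : (!![(7:ℂ), 24; 24*Complex.I, -7*Complex.I]) * !![2*c2+c3, 0; 0, c2]
      * !![7/625, -(24/625)*Complex.I; 24/625, (7/625)*Complex.I]
      = !![(49*(2*c2+c3)+576*c2)/625, -((168*(c2+c3))/625)*Complex.I;
           ((168*(c2+c3))/625)*Complex.I, (576*(2*c2+c3)+49*c2)/625] := by
    ext i j
    fin_cases i <;> fin_cases j <;>
      (simp [Matrix.mul_apply, Fin.sum_univ_two]
       try ring_nf
       try simp [Complex.I_sq]
       try ring_nf)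
  have hlogM3 : log !![348/125, -(336/125)*Complex.I; (336/125)*Complex.I, 1402/125]
      = !![(49*(2*c2+c3)+576*c2)/625, -((168*(c2+c3))/625)*Complex.I;
           ((168*(c2+c3))/625)*Complex.I, (576*(2*c2+c3)+49*c2)/625] := by
    apply key _ _ pdM3
    · ext i j
      fin_cases i <;> fin_cases j <;>
        simp [Matrix.conjTranspose_apply, map_div₀, map_ofNat, hconj2, hconj3, Complex.conj_I] <;> ring
    · rw [← hXM3, exp_SDS _ _ hSM3, e2, eM2]
      ext i j
      fin_cases i <;> fin_cases j <;>
        (simp [Matrix.mul_apply, Fin.sum_univ_two, Complex.ext_iff,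
          Complex.mul_re, Complex.mul_im]; norm_num)
  have ht3 := htr _ _ pdA3 pdB2
  rw [hABA3, hlogM3, hlogA3, hlogB2] at ht3
  simp [Matrix.trace_fin_two, Matrix.mul_apply, Matrix.vecMul, dotProduct,
    Fin.sum_univ_two, Matrix.of_apply,
    Matrix.cons_val', Matrix.cons_val_zero, Matrix.cons_val_one, Matrix.head_cons,
    Matrix.head_fin_const, Matrix.empty_val', Matrix.cons_val_fin_one] at ht3
  have h3 : T 0 1 - T 1 0 = 0 := by
    have hkey3 : (16*c2 - 9*c3) * (Complex.I * (T 0 1 - T 1 0)) = 0 := by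
      linear_combination (625/48 : ℂ) * ht3 - (14/48 : ℂ)*(16*c2-9*c3) * h1
    rcases mul_eq_zero.mp hkey3 with h | h
    · exact absurd h hcne
    · rcases mul_eq_zero.mp h with h' | h'
      · exact absurd h' Complex.I_ne_zero
      · exact h'
  have h01 : T 0 1 = 0 := by linear_combination (h2 + h3) / 2
  have h10 : T 1 0 = 0 := by linear_combination (h2 - h3) / 2
  -- T 0 0 is real
  have hre : ((T 0 0).re : ℂ) = T 0 0 := by
    have h := congrFun (congrFun hT 0) 0
    rw [Matrix.conjTranspose_apply] at h
    exact Complex.conj_eq_iff_re.mp h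
  refine ⟨(T 0 0).re, ?_⟩
  ext i j
  fin_cases i <;> fin_cases j <;>
    simp [Matrix.smul_apply, Matrix.one_apply]
  · exact hre.symm
  · exact h01
  · exact h10
  · rw [← h1]; exact hre.symm
end

section
/- Let φ: 𝔼_2 → 𝔼_2 be a map satisfying φ(A ∘ B) = φ(A) ∘ φ(B) for all A, B ∈ 𝔼_2, where A ∘ B = A^{1/2} B A^{1/2}. Then φ(A^{1/2}) = φ(A)^{1/2} for all A ∈ 𝔼_2, and φ is a Jordan triple map: φ(ABA) = φ(A)φ(B)φ(A) for all A, B ∈ 𝔼_2. -/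
open Matrix ComplexOrder

/-- A 2×2 effect: positive semidefinite and below the identity in the Loewner order. -/
def IsEffect2 (A : Matrix (Fin 2) (Fin 2) ℂ) : Prop :=
  A.PosSemidef ∧ (1 - A).PosSemidef

/-- The positive semidefinite square root of a positive semidefinite matrix
(removed from Mathlib; restored with its old definition). -/
noncomputable def Matrix.PosSemidef.sqrt {n : Type*} [Fintype n] {𝕜 : Type*} [RCLike 𝕜]
    [DecidableEq n] {A : Matrix n n 𝕜} (hA : A.PosSemidef) : Matrix n n 𝕜 :=
  hA.1.eigenvectorUnitary.1 * diagonal ((↑) ∘ Real.sqrt ∘ hA.1.eigenvalues) *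
  (star hA.1.eigenvectorUnitary : Matrix n n 𝕜)

section SqrtPort
open scoped MatrixOrder

lemma Matrix.PosSemidef.sqrt_eq_cfcSqrt {n : Type*} [Fintype n] {𝕜 : Type*} [RCLike 𝕜]
    [DecidableEq n] {A : Matrix n n 𝕜} (hA : A.PosSemidef) : hA.sqrt = CFC.sqrt A := by
  rw [CFC.sqrt_eq_real_sqrt A hA.nonneg, cfcₙ_eq_cfc, hA.1.cfc_eq]
  simp [IsHermitian.cfc, Matrix.PosSemidef.sqrt, Unitary.conjStarAlgAut_apply]

lemma Matrix.PosSemidef.posSemidef_sqrt {n : Type*} [Fintype n] {𝕜 : Type*} [RCLike 𝕜]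
    [DecidableEq n] {A : Matrix n n 𝕜} (hA : A.PosSemidef) : hA.sqrt.PosSemidef := by
  rw [hA.sqrt_eq_cfcSqrt]
  exact (CFC.sqrt_nonneg A).posSemidef

lemma Matrix.PosSemidef.sqrt_mul_self {n : Type*} [Fintype n] {𝕜 : Type*} [RCLike 𝕜]
    [DecidableEq n] {A : Matrix n n 𝕜} (hA : A.PosSemidef) : hA.sqrt * hA.sqrt = A := by
  rw [hA.sqrt_eq_cfcSqrt]
  exact CFC.sqrt_mul_sqrt_self A hA.nonneg

lemma Matrix.PosSemidef.eq_sqrt_of_sq_eq {n : Type*} [Fintype n] {𝕜 : Type*} [RCLike 𝕜]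
    [DecidableEq n] {A : Matrix n n 𝕜} (hA : A.PosSemidef) {B : Matrix n n 𝕜}
    (hB : B.PosSemidef) (hAB : A ^ 2 = B) : A = hB.sqrt := by
  rw [hB.sqrt_eq_cfcSqrt]
  exact (CFC.sqrt_unique (by rw [← pow_two, hAB]) hA.nonneg).symm

end SqrtPort

lemma eig_le_one {A : Matrix (Fin 2) (Fin 2) ℂ} (hA : IsEffect2 A) (i : Fin 2) :
    hA.1.1.eigenvalues i ≤ 1 := by
  have h0 := hA.2.re_dotProduct_nonneg ⇑(hA.1.1.eigenvectorBasis i)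
  set v : EuclideanSpace ℂ (Fin 2) := hA.1.1.eigenvectorBasis i with hv
  have h1 : (1 - A) *ᵥ ⇑v = ⇑v - A *ᵥ ⇑v := by
    rw [Matrix.sub_mulVec, Matrix.one_mulVec]
  have h2 : dotProduct (star ⇑v) ⇑v = 1 := by
    rw [dotProduct_comm, ← EuclideanSpace.inner_eq_star_dotProduct, inner_self_eq_norm_sq_to_K,
      hA.1.1.eigenvectorBasis.orthonormal.1 i]
    norm_num
  rw [h1, dotProduct_sub, h2] at h0
  have h3 := hA.1.1.eigenvalues_eq i
  simp only [map_sub, RCLike.one_re] at h0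
  rw [← h3] at h0
  linarith

lemma sqrt_effect {A : Matrix (Fin 2) (Fin 2) ℂ} (hA : IsEffect2 A) :
    IsEffect2 hA.1.sqrt := by
  refine ⟨hA.1.posSemidef_sqrt, ?_⟩
  set U : Matrix (Fin 2) (Fin 2) ℂ := hA.1.1.eigenvectorUnitary.1 with hU
  set D : Matrix (Fin 2) (Fin 2) ℂ :=
    Matrix.diagonal ((↑) ∘ Real.sqrt ∘ hA.1.1.eigenvalues) with hD
  have hUU : U * star U = 1 := (Matrix.mem_unitaryGroup_iff).mp hA.1.1.eigenvectorUnitary.2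
  have hsq : hA.1.sqrt = U * D * star U := by
    rw [Matrix.PosSemidef.sqrt]; rfl
  have key : 1 - hA.1.sqrt = U * (1 - D) * star U := by
    rw [hsq, Matrix.mul_sub, Matrix.mul_one, Matrix.sub_mul, hUU]
  rw [key]
  have hDpsd : (1 - D).PosSemidef := by
    have heq : 1 - D
        = Matrix.diagonal (fun i => ((1 - Real.sqrt (hA.1.1.eigenvalues i) : ℝ) : ℂ)) := by
      ext i j
      by_cases h : i = j
      · subst h
        simp [hD, Matrix.sub_apply, Matrix.one_apply, Matrix.diagonal_apply_eq]
      · simp [hD, Matrix.sub_apply, Matrix.one_apply, h, Matrix.diagonal_apply_ne _ h]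
    rw [heq]
    apply Matrix.PosSemidef.diagonal
    intro i
    have h1 : Real.sqrt (hA.1.1.eigenvalues i) ≤ 1 :=
      Real.sqrt_le_one.mpr (eig_le_one hA i)
    exact Complex.zero_le_real.mpr (by linarith)
  have := hDpsd.mul_mul_conjTranspose_same U
  rwa [← Matrix.star_eq_conjTranspose] at this

lemma sq_effect {A : Matrix (Fin 2) (Fin 2) ℂ} (hA : IsEffect2 A) :
    IsEffect2 (A * A) := by
  set S := hA.1.sqrt with hSdef
  have hs : S * S = A := hA.1.sqrt_mul_self
  constructor
  · have := Matrix.posSemidef_conjTranspose_mul_self A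
    rwa [hA.1.1] at this
  · have h1 : A - A * A = S ᴴ * (1 - A) * S := by
      have hSH : Sᴴ = S := hA.1.posSemidef_sqrt.1
      rw [hSH, Matrix.mul_sub, Matrix.mul_one, Matrix.sub_mul, hs]
      congr 1
      rw [← hs]
      simp only [Matrix.mul_assoc]
    have h2 : (A - A * A).PosSemidef := h1 ▸ hA.2.conjTranspose_mul_mul_same _
    have h3 : (1 : Matrix (Fin 2) (Fin 2) ℂ) - A * A = (1 - A) + (A - A * A) := by
      noncomm_ring
    rw [h3]
    exact hA.2.add h2

/-- Every sequential endomorphism of 𝔼₂ preserves square roots and is a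
Jordan triple map. -/
theorem sequential_endo_sqrt_and_jordan
    (φ : Matrix (Fin 2) (Fin 2) ℂ → Matrix (Fin 2) (Fin 2) ℂ)
    (hmaps : ∀ A : Matrix (Fin 2) (Fin 2) ℂ, IsEffect2 A → IsEffect2 (φ A))
    (hseq : ∀ (A B : Matrix (Fin 2) (Fin 2) ℂ) (hA : IsEffect2 A)
      (hB : IsEffect2 B),
      φ (hA.1.sqrt * B * hA.1.sqrt) =
        (hmaps A hA).1.sqrt * φ B * (hmaps A hA).1.sqrt) :
    (∀ (A : Matrix (Fin 2) (Fin 2) ℂ) (hA : IsEffect2 A),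
      φ hA.1.sqrt = (hmaps A hA).1.sqrt) ∧
    (∀ A B : Matrix (Fin 2) (Fin 2) ℂ, IsEffect2 A → IsEffect2 B →
      φ (A * B * A) = φ A * φ B * φ A) := by
  have part1 : ∀ (A : Matrix (Fin 2) (Fin 2) ℂ) (hA : IsEffect2 A),
      φ hA.1.sqrt = (hmaps A hA).1.sqrt := by
    intro A hA
    set S := hA.1.sqrt with hSd
    have hS : IsEffect2 S := sqrt_effect hA
    have key := hseq S S hS hS
    set T := hS.1.sqrt with hTd
    have a1 : T * T = S := hS.1.sqrt_mul_self
    have a2 : S * S = A := hA.1.sqrt_mul_self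
    have e1 : T * S * T = A := by
      rw [← a2, ← a1]
      simp only [Matrix.mul_assoc]
    set Q := (hmaps S hS).1.sqrt with hQd
    have hq : Q * Q = φ S := (hmaps S hS).1.sqrt_mul_self
    have e2 : Q * φ S * Q = φ S * φ S := by
      rw [← hq]
      simp only [Matrix.mul_assoc]
    rw [e1, e2] at key
    exact (hmaps S hS).1.eq_sqrt_of_sq_eq (hmaps A hA).1 (by rw [pow_two, ← key])
  refine ⟨part1, ?_⟩
  intro A B hA hB
  have hAA := sq_effect hA
  have hq : A = hAA.1.sqrt := hA.1.eq_sqrt_of_sq_eq hAA.1 (by rw [pow_two])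
  have key := hseq (A * A) B hAA hB
  rw [← hq] at key
  have p1 := part1 (A * A) hAA
  rw [← hq] at p1
  rw [key, ← p1]
end

section
/- For positive reals s, t let r(s,t) denote the unique non-negative real number with cosh(r(s,t)) = cosh(s)cosh(t), and set N(s,t) = r(s,t) / (cosh²(s)cosh²(t) - 1)^{1/2}. Define g(s,t) = N(s,t)cosh(t)sinh(s) - s and h(s,t) = N(s,t)sinh(t) - t. Then g and h are linearly independent functions on (0,∞)×(0,∞): if a, b are real numbers with a·g(s,t) + b·h(s,t) = 0 for all s, t > 0, then a = b = 0. -/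
set_option maxHeartbeats 1000000

private lemma exp_pow_key (x : ℝ) (n d : ℕ) (hx : (d : ℝ) * x = n) :
    Real.exp x ^ d = Real.exp 1 ^ n := by
  rw [← Real.exp_nat_mul, hx, ← Real.exp_nat_mul, mul_one]

private lemma exp_lt_of_pow {x q : ℝ} {n d : ℕ} (hx : (d : ℝ) * x = n)
    (hq : 0 < q) (hn : n ≠ 0)
    (h : (2.7182818286 : ℝ) ^ n ≤ q ^ d) : Real.exp x < q := by
  have key := exp_pow_key x n d hx
  have h2 : Real.exp 1 ^ n < (2.7182818286 : ℝ) ^ n :=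
    pow_lt_pow_left₀ Real.exp_one_lt_d9 (Real.exp_pos 1).le hn
  have h3 : Real.exp x ^ d < q ^ d := by
    rw [key]; exact lt_of_lt_of_le h2 h
  exact lt_of_pow_lt_pow_left₀ d hq.le h3

private lemma lt_exp_of_pow {x q : ℝ} {n d : ℕ} (hx : (d : ℝ) * x = n)
    (hn : n ≠ 0) (h : q ^ d ≤ (2.7182818283 : ℝ) ^ n) : q < Real.exp x := by
  have key := exp_pow_key x n d hx
  have h2 : (2.7182818283 : ℝ) ^ n < Real.exp 1 ^ n :=
    pow_lt_pow_left₀ Real.exp_one_gt_d9 (by norm_num) hn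
  have h3 : q ^ d < Real.exp x ^ d := by
    rw [key]; exact lt_of_le_of_lt h h2
  exact lt_of_pow_lt_pow_left₀ d (Real.exp_pos x).le h3

/-- cosh x < c given rational bounds on exp x. -/
private lemma cosh_lt_of {x l u c : ℝ} (hl : l < Real.exp x) (hu : Real.exp x < u)
    (hlp : 0 < l) (h : u + 1 / l ≤ 2 * c) : Real.cosh x < c := by
  have hxp := Real.exp_pos x
  have hinv : Real.exp (-x) * Real.exp x = 1 := by
    rw [← Real.exp_add]; simp
  have hip : 0 < Real.exp (-x) := Real.exp_pos _
  have hi2 : Real.exp (-x) < 1 / l := by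
    rw [lt_div_iff₀ hlp]
    nlinarith
  rw [Real.cosh_eq]
  nlinarith

private lemma lt_cosh_of {x l u c : ℝ} (hl : l < Real.exp x) (hu : Real.exp x < u)
    (hlp : 0 < l) (h : 2 * c ≤ l + 1 / u) : c < Real.cosh x := by
  have hxp := Real.exp_pos x
  have hinv : Real.exp (-x) * Real.exp x = 1 := by
    rw [← Real.exp_add]; simp
  have hip : 0 < Real.exp (-x) := Real.exp_pos _
  have hup : 0 < u := lt_trans hxp hu
  have hi2 : 1 / u < Real.exp (-x) := by
    rw [div_lt_iff₀ hup]
    nlinarith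
  rw [Real.cosh_eq]
  nlinarith

private lemma expm1_bounds :
    (0.3678794411 : ℝ) < Real.exp (-1) ∧ Real.exp (-1) < 0.3678794412 := by
  have hE1 := Real.exp_one_gt_d9
  have hE2 := Real.exp_one_lt_d9
  have hipos := Real.exp_pos (-1)
  have hie : Real.exp (-1) * Real.exp 1 = 1 := by rw [← Real.exp_add]; simp
  constructor <;> nlinarith

private lemma cosh1_bounds :
    (1.54308063 : ℝ) < Real.cosh 1 ∧ Real.cosh 1 < 1.54308064 := by
  have hE1 := Real.exp_one_gt_d9
  have hE2 := Real.exp_one_lt_d9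
  obtain ⟨h1, h2⟩ := expm1_bounds
  rw [Real.cosh_eq]
  constructor <;> nlinarith

private lemma sinh1_bounds :
    (1.17520119 : ℝ) < Real.sinh 1 ∧ Real.sinh 1 < 1.17520120 := by
  have hE1 := Real.exp_one_gt_d9
  have hE2 := Real.exp_one_lt_d9
  obtain ⟨h1, h2⟩ := expm1_bounds
  rw [Real.sinh_eq]
  constructor <;> nlinarith

private lemma cosh2_bounds :
    (3.76219568 : ℝ) < Real.cosh 2 ∧ Real.cosh 2 < 3.76219570 := by
  have hE1 := Real.exp_one_gt_d9
  have hE2 := Real.exp_one_lt_d9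
  have hEp := Real.exp_pos 1
  have hip := Real.exp_pos (-1)
  obtain ⟨h1, h2⟩ := expm1_bounds
  have he2 : Real.exp 2 = Real.exp 1 * Real.exp 1 := by rw [← Real.exp_add]; norm_num
  have hm2 : Real.exp (-2) = Real.exp (-1) * Real.exp (-1) := by
    rw [← Real.exp_add]; norm_num
  rw [Real.cosh_eq, show (-2 : ℝ) = -(2:ℝ) by norm_num] at *
  rw [he2, hm2]
  constructor <;> nlinarith

private lemma sinh2_bounds :
    (3.62686040 : ℝ) < Real.sinh 2 ∧ Real.sinh 2 < 3.62686041 := by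
  have hE1 := Real.exp_one_gt_d9
  have hE2 := Real.exp_one_lt_d9
  have hEp := Real.exp_pos 1
  have hip := Real.exp_pos (-1)
  obtain ⟨h1, h2⟩ := expm1_bounds
  have he2 : Real.exp 2 = Real.exp 1 * Real.exp 1 := by rw [← Real.exp_add]; norm_num
  have hm2 : Real.exp (-2) = Real.exp (-1) * Real.exp (-1) := by
    rw [← Real.exp_add]; norm_num
  rw [Real.sinh_eq, he2, hm2]
  constructor <;> nlinarith

private lemma mul_mem {x y xl xu yl yu : ℝ} (hxl : xl < x) (hxu : x < xu)
    (hyl : yl < y) (hyu : y < yu) (h0x : 0 < xl) (h0y : 0 < yl) :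
    xl * yl < x * y ∧ x * y < xu * yu := by
  constructor <;> nlinarith

private lemma det_neg {G1 H1 G2 H2 : ℝ}
    (h1 : (0.26713434 : ℝ) < G1) (h2 : H2 < -0.49650854)
    (h3 : G2 < 0.39772482) (h4 : (-0.17882817 : ℝ) < H1) (h5 : H1 < 0) :
    G1 * H2 - G2 * H1 < 0 := by
  nlinarith [mul_pos (by linarith : (0:ℝ) < G1 - 0.26713434)
      (by linarith : (0:ℝ) < -0.49650854 - H2),
    mul_pos (by linarith : (0:ℝ) < 0.39772482 - G2)
      (by linarith : (0:ℝ) < H1 + 0.17882817)]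

/-- Linear independence of the two auxiliary functions g and h built from
r(s,t) = arcosh(cosh s · cosh t) and N(s,t) = r(s,t)/√(cosh²s·cosh²t − 1). -/
theorem aux_functions_linearly_independent
    (r : ℝ → ℝ → ℝ)
    (hr : ∀ s t : ℝ, 0 < s → 0 < t →
      0 ≤ r s t ∧ Real.cosh (r s t) = Real.cosh s * Real.cosh t)
    (a b : ℝ)
    (hab : ∀ s t : ℝ, 0 < s → 0 < t →
      a * ((r s t / Real.sqrt (Real.cosh s ^ 2 * Real.cosh t ^ 2 - 1)) *
            Real.cosh t * Real.sinh s - s) +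
        b * ((r s t / Real.sqrt (Real.cosh s ^ 2 * Real.cosh t ^ 2 - 1)) *
            Real.sinh t - t) = 0) :
    a = 0 ∧ b = 0 := by
  obtain ⟨c1l, c1u⟩ := cosh1_bounds
  obtain ⟨s1l, s1u⟩ := sinh1_bounds
  obtain ⟨c2l, c2u⟩ := cosh2_bounds
  obtain ⟨s2l, s2u⟩ := sinh2_bounds
  -- products of cosh values
  have hC1 : (2.38109783 : ℝ) < Real.cosh 1 * Real.cosh 1 ∧
      Real.cosh 1 * Real.cosh 1 < 2.38109787 := by
    have h := mul_mem c1l c1u c1l c1u (by norm_num) (by norm_num)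
    constructor
    · linarith [h.1, show (2.38109783:ℝ) ≤ 1.54308063 * 1.54308063 by norm_num]
    · linarith [h.2, show (1.54308064:ℝ) * 1.54308064 ≤ 2.38109787 by norm_num]
  have hC2 : (5.80537128 : ℝ) < Real.cosh 2 * Real.cosh 1 ∧
      Real.cosh 2 * Real.cosh 1 < 5.80537135 := by
    have h := mul_mem c2l c2u c1l c1u (by norm_num) (by norm_num)
    constructor
    · linarith [h.1, show (5.80537128:ℝ) ≤ 3.76219568 * 1.54308063 by norm_num]
    · linarith [h.2, show (3.76219570:ℝ) * 1.54308064 ≤ 5.80537135 by norm_num]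
  -- exp bounds at bracketing points
  have e151l : (4.52 : ℝ) < Real.exp (1.51 : ℝ) :=
    lt_exp_of_pow (n := 151) (d := 100) (by norm_num) (by norm_num) (by norm_num)
  have e151u : Real.exp (1.51 : ℝ) < 4.53 :=
    exp_lt_of_pow (n := 151) (d := 100) (by norm_num) (by norm_num) (by norm_num)
      (by norm_num)
  have e1515l : (4.548 : ℝ) < Real.exp (1.515 : ℝ) :=
    lt_exp_of_pow (n := 303) (d := 200) (by norm_num) (by norm_num) (by
      rw [show (2.7182818283 : ℝ) ^ 303 = (2.7182818283 : ℝ) ^ 151 * (2.7182818283 : ℝ) ^ 152 by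
        rw [← pow_add]]
      norm_num)
  have e1515u : Real.exp (1.515 : ℝ) < 4.551 :=
    exp_lt_of_pow (n := 303) (d := 200) (by norm_num) (by norm_num) (by norm_num)
      (by
        rw [show (2.7182818286 : ℝ) ^ 303 = (2.7182818286 : ℝ) ^ 151 * (2.7182818286 : ℝ) ^ 152 by
          rw [← pow_add]]
        norm_num)
  have e244l : (11.47 : ℝ) < Real.exp (2.44 : ℝ) :=
    lt_exp_of_pow (n := 61) (d := 25) (by norm_num) (by norm_num) (by norm_num)
  have e244u : Real.exp (2.44 : ℝ) < 11.48 :=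
    exp_lt_of_pow (n := 61) (d := 25) (by norm_num) (by norm_num) (by norm_num)
      (by norm_num)
  have e245l : (11.58 : ℝ) < Real.exp (2.45 : ℝ) :=
    lt_exp_of_pow (n := 49) (d := 20) (by norm_num) (by norm_num) (by norm_num)
  have e245u : Real.exp (2.45 : ℝ) < 11.60 :=
    exp_lt_of_pow (n := 49) (d := 20) (by norm_num) (by norm_num) (by norm_num)
      (by norm_num)
  -- bounds on r 1 1 and r 2 1
  obtain ⟨hr1n, hr1c⟩ := hr 1 1 one_pos one_pos
  obtain ⟨hr2n, hr2c⟩ := hr 2 1 two_pos one_pos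
  have hr1lo : (1.51 : ℝ) < r 1 1 := by
    have hc : Real.cosh (1.51 : ℝ) < Real.cosh (r 1 1) := by
      rw [hr1c]
      have h := cosh_lt_of e151l e151u (by norm_num) (c := 2.38109783) (by norm_num)
      linarith [hC1.1]
    have h := Real.cosh_lt_cosh.mp hc
    rwa [abs_of_nonneg (by norm_num : (0:ℝ) ≤ 1.51), abs_of_nonneg hr1n] at h
  have hr1hi : r 1 1 < (1.515 : ℝ) := by
    have hc : Real.cosh (r 1 1) < Real.cosh (1.515 : ℝ) := by
      rw [hr1c]
      have h := lt_cosh_of e1515l e1515u (by norm_num) (c := 2.38109787) (by norm_num)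
      linarith [hC1.2]
    have h := Real.cosh_lt_cosh.mp hc
    rwa [abs_of_nonneg hr1n, abs_of_nonneg (by norm_num : (0:ℝ) ≤ 1.515)] at h
  have hr2lo : (2.44 : ℝ) < r 2 1 := by
    have hc : Real.cosh (2.44 : ℝ) < Real.cosh (r 2 1) := by
      rw [hr2c]
      have h := cosh_lt_of e244l e244u (by norm_num) (c := 5.80537128) (by norm_num)
      linarith [hC2.1]
    have h := Real.cosh_lt_cosh.mp hc
    rwa [abs_of_nonneg (by norm_num : (0:ℝ) ≤ 2.44), abs_of_nonneg hr2n] at h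
  have hr2hi : r 2 1 < (2.45 : ℝ) := by
    have hc : Real.cosh (r 2 1) < Real.cosh (2.45 : ℝ) := by
      rw [hr2c]
      have h := lt_cosh_of e245l e245u (by norm_num) (c := 5.80537135) (by norm_num)
      linarith [hC2.2]
    have h := Real.cosh_lt_cosh.mp hc
    rwa [abs_of_nonneg hr2n, abs_of_nonneg (by norm_num : (0:ℝ) ≤ 2.45)] at h
  -- bounds on the square-root denominators
  have hsq1 : (2.38109783 : ℝ) < Real.cosh 1 ^ 2 ∧ Real.cosh 1 ^ 2 < 2.38109787 := by
    rw [pow_two]; exact hC1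
  have hsq2 : (14.15411633 : ℝ) < Real.cosh 2 ^ 2 ∧ Real.cosh 2 ^ 2 < 14.15411649 := by
    rw [pow_two]
    have h := mul_mem c2l c2u c2l c2u (by norm_num) (by norm_num)
    constructor
    · linarith [h.1, show (14.15411633:ℝ) ≤ 3.76219568 * 3.76219568 by norm_num]
    · linarith [h.2, show (3.76219570:ℝ) * 3.76219570 ≤ 14.15411649 by norm_num]
  have hX1 : (4.66962687 : ℝ) < Real.cosh 1 ^ 2 * Real.cosh 1 ^ 2 - 1 ∧
      Real.cosh 1 ^ 2 * Real.cosh 1 ^ 2 - 1 < 4.66962707 := by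
    have h := mul_mem hsq1.1 hsq1.2 hsq1.1 hsq1.2 (by norm_num) (by norm_num)
    constructor
    · linarith [h.1, show (5.66962687:ℝ) ≤ 2.38109783 * 2.38109783 by norm_num]
    · linarith [h.2, show (2.38109787:ℝ) * 2.38109787 ≤ 5.66962707 by norm_num]
  have hX2 : (32.70233567 : ℝ) < Real.cosh 2 ^ 2 * Real.cosh 1 ^ 2 - 1 ∧
      Real.cosh 2 ^ 2 * Real.cosh 1 ^ 2 - 1 < 32.70233663 := by
    have h := mul_mem hsq2.1 hsq2.2 hsq1.1 hsq1.2 (by norm_num) (by norm_num)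
    constructor
    · linarith [h.1, show (33.70233567:ℝ) ≤ 14.15411633 * 2.38109783 by norm_num]
    · linarith [h.2, show (14.15411649:ℝ) * 2.38109787 ≤ 33.70233663 by norm_num]
  set D1 : ℝ := Real.sqrt (Real.cosh 1 ^ 2 * Real.cosh 1 ^ 2 - 1) with hD1def
  set D2 : ℝ := Real.sqrt (Real.cosh 2 ^ 2 * Real.cosh 1 ^ 2 - 1) with hD2def
  have hD1l : (2.1609 : ℝ) < D1 := by
    rw [hD1def, show ((2.1609:ℝ) < Real.sqrt (Real.cosh 1 ^ 2 * Real.cosh 1 ^ 2 - 1)) ↔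
      ((2.1609:ℝ)^2 < Real.cosh 1 ^ 2 * Real.cosh 1 ^ 2 - 1) from Real.lt_sqrt (by norm_num)]
    linarith [hX1.1, show ((2.1609:ℝ)^2 ≤ 4.66962687) by norm_num]
  have hD1u : D1 < 2.1610 := by
    rw [hD1def, Real.sqrt_lt' (by norm_num)]
    linarith [hX1.2, show (4.66962707:ℝ) ≤ (2.1610:ℝ)^2 by norm_num]
  have hD2l : (5.71859 : ℝ) < D2 := by
    rw [hD2def, show ((5.71859:ℝ) < Real.sqrt (Real.cosh 2 ^ 2 * Real.cosh 1 ^ 2 - 1)) ↔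
      ((5.71859:ℝ)^2 < Real.cosh 2 ^ 2 * Real.cosh 1 ^ 2 - 1) from Real.lt_sqrt (by norm_num)]
    linarith [hX2.1, show ((5.71859:ℝ)^2 ≤ 32.70233567) by norm_num]
  have hD2u : D2 < 5.71860 := by
    rw [hD2def, Real.sqrt_lt' (by norm_num)]
    linarith [hX2.2, show (32.70233663:ℝ) ≤ (5.71860:ℝ)^2 by norm_num]
  have hD1p : (0:ℝ) < D1 := by linarith
  have hD2p : (0:ℝ) < D2 := by linarith
  -- bounds on N = r / D
  have hN1l : (0.69875 : ℝ) < r 1 1 / D1 := by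
    rw [lt_div_iff₀ hD1p]
    have : (0.69875 : ℝ) * D1 < 0.69875 * 2.1610 := by linarith
    linarith [show (0.69875:ℝ) * 2.1610 ≤ 1.51 by norm_num]
  have hN1u : r 1 1 / D1 < 0.70110 := by
    rw [div_lt_iff₀ hD1p]
    have : (0.70110 : ℝ) * 2.1609 < 0.70110 * D1 := by linarith
    linarith [show (1.515:ℝ) ≤ 0.70110 * 2.1609 by norm_num]
  have hN2l : (0.42667 : ℝ) < r 2 1 / D2 := by
    rw [lt_div_iff₀ hD2p]
    have : (0.42667 : ℝ) * D2 < 0.42667 * 5.71860 := by linarith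
    linarith [show (0.42667:ℝ) * 5.71860 ≤ 2.44 by norm_num]
  have hN2u : r 2 1 / D2 < 0.42843 := by
    rw [div_lt_iff₀ hD2p]
    have : (0.42843 : ℝ) * 5.71859 < 0.42843 * D2 := by linarith
    linarith [show (2.45:ℝ) ≤ 0.42843 * 5.71859 by norm_num]
  -- the two equations
  have eq1 := hab 1 1 one_pos one_pos
  have eq2 := hab 2 1 two_pos one_pos
  rw [← hD1def] at eq1
  rw [← hD2def] at eq2
  set N1 : ℝ := r 1 1 / D1 with hN1def
  set N2 : ℝ := r 2 1 / D2 with hN2def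
  -- bounds on G1 H1 G2 H2
  have hP1 : (1.07822759 : ℝ) < N1 * Real.cosh 1 ∧ N1 * Real.cosh 1 < 1.08185384 := by
    have h := mul_mem hN1l hN1u c1l c1u (by norm_num) (by norm_num)
    constructor
    · linarith [h.1, show (1.07822759:ℝ) ≤ 0.69875 * 1.54308063 by norm_num]
    · linarith [h.2, show (0.70110:ℝ) * 1.54308064 ≤ 1.08185384 by norm_num]
  have hP2 : (0.65838621 : ℝ) < N2 * Real.cosh 1 ∧ N2 * Real.cosh 1 < 0.66110204 := by
    have h := mul_mem hN2l hN2u c1l c1u (by norm_num) (by norm_num)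
    constructor
    · linarith [h.1, show (0.65838621:ℝ) ≤ 0.42667 * 1.54308063 by norm_num]
    · linarith [h.2, show (0.42843:ℝ) * 1.54308064 ≤ 0.66110204 by norm_num]
  have hG1 : (0.26713434 : ℝ) < N1 * Real.cosh 1 * Real.sinh 1 - 1 ∧
      N1 * Real.cosh 1 * Real.sinh 1 - 1 < 0.27139594 := by
    have h := mul_mem hP1.1 hP1.2 s1l s1u (by norm_num) (by norm_num)
    constructor
    · linarith [h.1, show (1.26713434:ℝ) ≤ 1.07822759 * 1.17520119 by norm_num]
    · linarith [h.2, show (1.08185384:ℝ) * 1.17520120 ≤ 1.27139594 by norm_num]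
  have hH1 : (-0.17882817 : ℝ) < N1 * Real.sinh 1 - 1 ∧
      N1 * Real.sinh 1 - 1 < -0.17606643 := by
    have h := mul_mem hN1l hN1u s1l s1u (by norm_num) (by norm_num)
    constructor
    · linarith [h.1, show (0.82117183:ℝ) ≤ 0.69875 * 1.17520119 by norm_num]
    · linarith [h.2, show (0.70110:ℝ) * 1.17520120 ≤ 0.82393357 by norm_num]
  have hG2 : (0.38787487 : ℝ) < N2 * Real.cosh 1 * Real.sinh 2 - 2 ∧
      N2 * Real.cosh 1 * Real.sinh 2 - 2 < 0.39772482 := by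
    have h := mul_mem hP2.1 hP2.2 s2l s2u (by norm_num) (by norm_num)
    constructor
    · linarith [h.1, show (2.38787487:ℝ) ≤ 0.65838621 * 3.62686040 by norm_num]
    · linarith [h.2, show (0.66110204:ℝ) * 3.62686041 ≤ 2.39772482 by norm_num]
  have hH2 : (-0.49857691 : ℝ) < N2 * Real.sinh 1 - 1 ∧
      N2 * Real.sinh 1 - 1 < -0.49650854 := by
    have h := mul_mem hN2l hN2u s1l s1u (by norm_num) (by norm_num)
    constructor
    · linarith [h.1, show (0.50142309:ℝ) ≤ 0.42667 * 1.17520119 by norm_num]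
    · linarith [h.2, show (0.42843:ℝ) * 1.17520120 ≤ 0.50349146 by norm_num]
  set G1 : ℝ := N1 * Real.cosh 1 * Real.sinh 1 - 1 with hG1def
  set H1 : ℝ := N1 * Real.sinh 1 - 1 with hH1def
  set G2 : ℝ := N2 * Real.cosh 1 * Real.sinh 2 - 2 with hG2def
  set H2 : ℝ := N2 * Real.sinh 1 - 1 with hH2def
  have heq1 : a * G1 + b * H1 = 0 := by linarith [eq1]
  have heq2 : a * G2 + b * H2 = 0 := by linarith [eq2]
  have hdet : G1 * H2 - G2 * H1 < 0 :=
    det_neg hG1.1 hH2.2 hG2.2 hH1.1 (by linarith [hH1.2])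
  have hakey : a * (G1 * H2 - G2 * H1) = 0 := by
    linear_combination H2 * heq1 - H1 * heq2
  have ha : a = 0 := by
    rcases mul_eq_zero.mp hakey with h | h
    · exact h
    · linarith
  refine ⟨ha, ?_⟩
  have hb : b * H1 = 0 := by rw [ha] at heq1; linarith
  rcases mul_eq_zero.mp hb with h | h
  · exact h
  · linarith [hH1.2]
end
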